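/- (Transfer of inexact static guarantees to the equilibrium problem) Suppose f_y is α-strongly convex for every y ∈ E, set ρ := γβ/α, and assume ρ ≤ 1/2. Fix x ∈ E, j ∈ ℕ, constants B ≥ 0, C ≥ 0, q ∈ (0,1), and let X_j : Ω → E be a random point on a probability space (Ω, P) satisfying, for every y ∈ E, E[φ_x(X_j)] − φ_x(y) ≤ C(1 − q)^j · (φ_x(x) − φ_x(y) + (α/2)·E‖X_j − y‖²) + B, where φ_x := f_x + r. If moreover 1 − ρ − C(1 − q)^j > 0, then with φ := f_{x̄} + r: E[φ(X_j)] − φ(x̄) ≤ ((ρ + 2C(1 − q)^j)/(1 − ρ − C(1 − q)^j))·(φ(x) − φ(x̄)) + B/(1 − ρ − C(1 − q)^j). -/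

import Mathlib

/-!
Write `φ = f_{x̄} + r`, `S = φ(x) − φ(x̄)`, `T = E[φ(X)] − φ(x̄)` and `d = f_x − f_{x̄}`.
Strong convexity of `φ` at its minimiser gives quadratic growth `α/2 ‖y − x̄‖² ≤ φ(y) − φ(x̄)`.
Testing the Kantorovich–Rubinstein bound against `z ↦ ⟪v, ∇ℓ(y, z)⟫` gives
`‖∇d‖ ≤ γβ‖x − x̄‖`, so by the mean value inequality and AM–GM
`|d(y) − d(x̄)| ≤ ρ (S + φ(y) − φ(x̄))`. The guarantee at `y = x̄`, combined with this bound at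
`y = x` and at `y = X`, yields `(1 − ρ − ε) T ≤ (ρ + 2ε) S + B` for `ε = C(1 − q)^j`, where
`2ρ ≤ 1` absorbs the term `2ρεS`.
-/

open MeasureTheory Set Filter Topology
open scoped NNReal RealInnerProductSpace

theorem StrongConvexOn.mul_sq_norm_sub_le_of_isMinOn {E : Type*} [NormedAddCommGroup E]
    [NormedSpace ℝ E] {s : Set E} {m : ℝ} {φ : E → ℝ} {a y : E} (hφ : StrongConvexOn s m φ)
    (hmin : IsMinOn φ s a) (ha : a ∈ s) (hy : y ∈ s) :
    m / 2 * ‖y - a‖ ^ 2 ≤ φ y - φ a := by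
  have hsegment : ∀ t ∈ Ioo (0 : ℝ) 1, (1 - t) * (m / 2 * ‖y - a‖ ^ 2) ≤ φ y - φ a := by
    rintro t ⟨ht0, ht1⟩
    have hconv := hφ.2 hy ha ht0.le (sub_nonneg.2 ht1.le) (add_sub_cancel t 1)
    have hmin' : φ a ≤ φ (t • y + (1 - t) • a) :=
      hmin (hφ.1 hy ha ht0.le (sub_nonneg.2 ht1.le) (add_sub_cancel t 1))
    simp only [smul_eq_mul] at hconv
    have : t * ((1 - t) * (m / 2 * ‖y - a‖ ^ 2)) ≤ t * (φ y - φ a) := by linarith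
    exact le_of_mul_le_mul_left this ht0
  have hlim : Tendsto (fun t : ℝ => (1 - t) * (m / 2 * ‖y - a‖ ^ 2)) (𝓝[>] 0)
      (𝓝 (m / 2 * ‖y - a‖ ^ 2)) := by
    have : Continuous (fun t : ℝ => (1 - t) * (m / 2 * ‖y - a‖ ^ 2)) := by fun_prop
    simpa using this.continuousWithinAt.tendsto (x := 0) (s := Ioi 0)
  exact le_of_tendsto hlim (eventually_of_mem (Ioo_mem_nhdsGT one_pos) hsegment)

section KantorovichRubinstein

variable {Z : Type*} [PseudoMetricSpace Z] [MeasurableSpace Z] {μ ν : Measure Z} {c : ℝ}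

theorem abs_integral_sub_integral_le_of_lipschitzWith
    (hKR : ∀ g : Z → ℝ, LipschitzWith 1 g → |∫ z, g z ∂μ - ∫ z, g z ∂ν| ≤ c)
    {K : ℝ≥0} {g : Z → ℝ} (hg : LipschitzWith K g) :
    |∫ z, g z ∂μ - ∫ z, g z ∂ν| ≤ K * c := by
  have hscaled : ∀ t : ℝ≥0, K < t → |∫ z, g z ∂μ - ∫ z, g z ∂ν| ≤ t * c := by
    intro t hKt
    have ht : (0 : ℝ) < t := K.coe_nonneg.trans_lt hKt
    have hunit : LipschitzWith 1 (fun z => (t : ℝ)⁻¹ * g z) :=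
      LipschitzWith.of_dist_le_mul fun z z' => by
        rw [Real.dist_eq, ← mul_sub, abs_mul, abs_inv, abs_of_pos ht, NNReal.coe_one, one_mul,
          inv_mul_le_iff₀ ht, ← Real.dist_eq]
        exact (hg.weaken hKt.le).dist_le_mul z z'
    have := hKR _ hunit
    rwa [integral_const_mul, integral_const_mul, ← mul_sub, abs_mul, abs_inv, abs_of_pos ht,
      inv_mul_le_iff₀ ht] at this
  have hlim : Tendsto (fun t : ℝ≥0 => (t : ℝ) * c) (𝓝[>] K) (𝓝 (K * c)) :=
    ((NNReal.continuous_coe.mul continuous_const).tendsto K).mono_left nhdsWithin_le_nhds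
  exact ge_of_tendsto hlim (eventually_nhdsWithin_of_forall hscaled)

theorem norm_integral_sub_integral_le_of_lipschitzWith {F : Type*} [NormedAddCommGroup F]
    [InnerProductSpace ℝ F] [CompleteSpace F]
    (hKR : ∀ g : Z → ℝ, LipschitzWith 1 g → |∫ z, g z ∂μ - ∫ z, g z ∂ν| ≤ c)
    {K : ℝ≥0} {G : Z → F} (hG : LipschitzWith K G) (hμ : Integrable G μ) (hν : Integrable G ν) :
    ‖∫ z, G z ∂μ - ∫ z, G z ∂ν‖ ≤ K * c := by
  set w := ∫ z, G z ∂μ - ∫ z, G z ∂ν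
  have hc : 0 ≤ c := by simpa using hKR (fun _ => 0) ((LipschitzWith.const 0).weaken zero_le_one)
  have hsq : ‖w‖ ^ 2 ≤ ‖w‖ * (K * c) := by
    have hinner := abs_integral_sub_integral_le_of_lipschitzWith hKR
      ((innerSL ℝ w).lipschitz.comp hG)
    rw [← real_inner_self_eq_norm_sq]
    calc ⟪w, w⟫ = ∫ z, ⟪w, G z⟫ ∂μ - ∫ z, ⟪w, G z⟫ ∂ν := by
          rw [integral_inner hμ, integral_inner hν, inner_sub_right]
      _ ≤ ‖w‖ * (K * c) := by
          simpa [innerSL_apply_norm, mul_assoc] using (le_abs_self _).trans hinner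
  nlinarith [norm_nonneg w, mul_nonneg K.coe_nonneg hc]

end KantorovichRubinstein

section Gradient

variable {F : Type*} [NormedAddCommGroup F] [InnerProductSpace ℝ F] [CompleteSpace F]

theorem HasGradientAt.sub {φ ψ : F → ℝ} {φ' ψ' x : F} (hφ : HasGradientAt φ φ' x)
    (hψ : HasGradientAt ψ ψ' x) : HasGradientAt (fun y => φ y - ψ y) (φ' - ψ') x := by
  rw [hasGradientAt_iff_hasFDerivAt, map_sub]
  exact hφ.hasFDerivAt.sub hψ.hasFDerivAt

theorem abs_sub_le_of_hasGradientAt_of_norm_le {φ : F → ℝ} {φ' : F → F} {C : ℝ}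
    (hφ : ∀ y, HasGradientAt φ (φ' y) y) (hC : ∀ y, ‖φ' y‖ ≤ C) (a b : F) :
    |φ a - φ b| ≤ C * ‖a - b‖ := by
  simpa using Convex.norm_image_sub_le_of_norm_hasFDerivWithin_le
    (fun y _ => (hφ y).hasFDerivAt.hasFDerivWithinAt) (fun y _ => by simpa using hC y)
    convex_univ (mem_univ b) (mem_univ a)

end Gradient

theorem abs_sub_le_of_quadratic_growth {E : Type*} [NormedAddCommGroup E] {φ d : E → ℝ}
    {α L : ℝ} {x xbar : E} (hα : 0 < α) (hL : 0 ≤ L)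
    (hgrow : ∀ y, α / 2 * ‖y - xbar‖ ^ 2 ≤ φ y - φ xbar)
    (hd : ∀ a b, |d a - d b| ≤ L * ‖x - xbar‖ * ‖a - b‖) (y : E) :
    |d y - d xbar| ≤ L / α * ((φ x - φ xbar) + (φ y - φ xbar)) :=
  calc |d y - d xbar| ≤ L * ‖x - xbar‖ * ‖y - xbar‖ := hd y xbar
    _ ≤ L / 2 * (‖x - xbar‖ ^ 2 + ‖y - xbar‖ ^ 2) := by
        nlinarith [mul_nonneg hL (sq_nonneg (‖x - xbar‖ - ‖y - xbar‖))]
    _ = L / α * (α / 2 * ‖x - xbar‖ ^ 2 + α / 2 * ‖y - xbar‖ ^ 2) := by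
        field_simp
    _ ≤ L / α * ((φ x - φ xbar) + (φ y - φ xbar)) := by
        gcongr
        exacts [hgrow x, hgrow y]

theorem mul_integral_add_mul_integral_le {Ω : Type*} [MeasurableSpace Ω] {P : Measure Ω}
    [IsProbabilityMeasure P] {u v : Ω → ℝ} (hu : Integrable u P) (hv : Integrable v P)
    {a b c : ℝ} (h : ∀ ω, a * u ω + b * v ω ≤ c) :
    a * ∫ ω, u ω ∂P + b * ∫ ω, v ω ∂P ≤ c :=
  calc a * ∫ ω, u ω ∂P + b * ∫ ω, v ω ∂P = ∫ ω, (a * u ω + b * v ω) ∂P := by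
        rw [integral_add (hu.const_mul a) (hv.const_mul b), integral_const_mul,
          integral_const_mul]
    _ ≤ ∫ _, c ∂P := integral_mono ((hu.const_mul a).add (hv.const_mul b)) (integrable_const c) h
    _ = c := by simp

theorem transfer_inexact_static_guarantee_general
    {E : Type*} [NormedAddCommGroup E] [InnerProductSpace ℝ E] [FiniteDimensional ℝ E]
    {Z : Type*} [MetricSpace Z] [MeasurableSpace Z]
    (G : E → Z → E) (β γ : ℝ) (hβ : 0 ≤ β) (hγ : 0 ≤ γ)
    (hlip : ∀ (x : E) (z z' : Z), ‖G x z - G x z'‖ ≤ β * dist z z')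
    (D : E → Measure Z)
    (hintG : ∀ x y : E, Integrable (fun z => G y z) (D x))
    (f : E → E → ℝ) (Gf : E → E → E)
    (hGfdef : ∀ x y : E, Gf x y = ∫ z, G y z ∂(D x))
    (hfgrad : ∀ x y : E, HasGradientAt (f x) (Gf x y) y)
    (hDlip : ∀ x y : E, ∀ g : Z → ℝ, LipschitzWith 1 g →
      |(∫ z, g z ∂(D x)) - ∫ z, g z ∂(D y)| ≤ γ * ‖x - y‖)
    (r : E → ℝ) (hr : ConvexOn ℝ univ r)
    (xbar : E) (hxbar : ∀ y : E, f xbar xbar + r xbar ≤ f xbar y + r y)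
    (α : ℝ) (hα : 0 < α)
    (hsc : ∀ x : E, ConvexOn ℝ univ (fun y => f x y - α / 2 * ‖y‖ ^ 2))
    (hρ : γ * β / α ≤ 1 / 2)
    (x : E) (j : ℕ) (B C q : ℝ) (hC : 0 ≤ C) (hq1 : q < 1)
    {Ω : Type*} [MeasurableSpace Ω] (P : Measure Ω) [IsProbabilityMeasure P]
    (X : Ω → E)
    (hintφx : Integrable (fun ω => f x (X ω) + r (X ω)) P)
    (hintφ : Integrable (fun ω => f xbar (X ω) + r (X ω)) P)
    (hintX : ∀ y : E, Integrable (fun ω => ‖X ω - y‖ ^ 2) P)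
    (hguarantee : ∀ y : E,
      (∫ ω, (f x (X ω) + r (X ω)) ∂P) - (f x y + r y)
        ≤ C * (1 - q) ^ j * (f x x + r x - (f x y + r y)
            + α / 2 * (∫ ω, ‖X ω - y‖ ^ 2 ∂P)) + B)
    (hpos : 0 < 1 - γ * β / α - C * (1 - q) ^ j) :
    (∫ ω, (f xbar (X ω) + r (X ω)) ∂P) - (f xbar xbar + r xbar)
      ≤ ((γ * β / α + 2 * C * (1 - q) ^ j) / (1 - γ * β / α - C * (1 - q) ^ j))
          * (f xbar x + r x - (f xbar xbar + r xbar))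
        + B / (1 - γ * β / α - C * (1 - q) ^ j) := by
  have hε : 0 ≤ C * (1 - q) ^ j := mul_nonneg hC (pow_nonneg (sub_nonneg.2 hq1.le) j)
  have hsc_xbar : StrongConvexOn univ α (fun y => f xbar y + r y) :=
    strongConvexOn_iff_convex.2 <| ((hsc xbar).add hr).congr fun y _ => by
      simp only [Pi.add_apply]
      ring
  have hgrow : ∀ y, α / 2 * ‖y - xbar‖ ^ 2 ≤ (f xbar y + r y) - (f xbar xbar + r xbar) :=
    fun y => hsc_xbar.mul_sq_norm_sub_le_of_isMinOn (isMinOn_univ_iff.2 hxbar) (mem_univ _)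
      (mem_univ y)
  have hgrad_gap : ∀ y, ‖Gf x y - Gf xbar y‖ ≤ γ * β * ‖x - xbar‖ := fun y => by
    have := norm_integral_sub_integral_le_of_lipschitzWith (hDlip x xbar)
      (LipschitzWith.of_dist_le' fun z z' => by simpa [dist_eq_norm] using hlip y z z')
      (hintG x y) (hintG xbar y)
    rwa [← hGfdef, ← hGfdef, Real.coe_toNNReal _ hβ, ← mul_assoc, mul_comm β γ] at this
  have hdrift := abs_sub_le_of_quadratic_growth hα (mul_nonneg hγ hβ) hgrow
    (abs_sub_le_of_hasGradientAt_of_norm_le (fun y => (hfgrad x y).sub (hfgrad xbar y))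
      hgrad_gap)
  have hsecond_moment := mul_integral_add_mul_integral_le (hintX xbar) hintφ (a := α / 2) (b := -1)
    (c := -(f xbar xbar + r xbar))
    fun ω => by linarith [hgrow (X ω)]
  have hdrift_mean := mul_integral_add_mul_integral_le hintφ hintφx (a := 1 - γ * β / α) (b := -1)
    (c := γ * β / α * (f xbar x + r x - 2 * (f xbar xbar + r xbar))
      + (f xbar xbar + r xbar) - (f x xbar + r xbar))
    fun ω => by linarith [(abs_le.1 (hdrift (X ω))).1]
  have hgap_x := (abs_le.1 (hdrift x)).2
  have hS : 0 ≤ f xbar x + r x - (f xbar xbar + r xbar) := sub_nonneg.2 (hxbar x)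
  rw [div_mul_eq_mul_div, ← add_div, le_div_iff₀ hpos]
  nlinarith [hguarantee xbar, mul_nonneg hε hS]

/-- **Transfer of inexact static guarantees to the equilibrium problem.** If every `f_y` is
`α`-strongly convex, `ρ = γβ/α ≤ 1/2`, and a random point `X_j` satisfies the inexact
guarantee `E[φ_x(X_j)] − φ_x(y) ≤ C(1−q)^j(φ_x(x) − φ_x(y) + (α/2)E‖X_j − y‖²) + B` for
every `y`, with `1 − ρ − C(1−q)^j > 0`, then with `φ = f_{x̄} + r`:
`E[φ(X_j)] − φ(x̄) ≤ ((ρ + 2C(1−q)^j)/(1 − ρ − C(1−q)^j))(φ(x) − φ(x̄))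
  + B/(1 − ρ − C(1−q)^j)`. -/
theorem transfer_inexact_static_guarantee
    {E : Type*} [NormedAddCommGroup E] [InnerProductSpace ℝ E] [FiniteDimensional ℝ E]
    {Z : Type*} [MetricSpace Z] [MeasurableSpace Z] [BorelSpace Z]
    (ℓ : E → Z → ℝ) (G : E → Z → E) (β γ : ℝ) (hβ : 0 ≤ β) (hγ : 0 ≤ γ)
    (hgrad : ∀ (x : E) (z : Z), HasGradientAt (fun x' => ℓ x' z) (G x z) x)
    (hlip : ∀ (x : E) (z z' : Z), ‖G x z - G x z'‖ ≤ β * dist z z')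
    (D : E → Measure Z) (hD : ∀ x : E, IsProbabilityMeasure (D x))
    (hint : ∀ x y : E, Integrable (fun z => ℓ y z) (D x))
    (hintG : ∀ x y : E, Integrable (fun z => G y z) (D x))
    (f : E → E → ℝ) (Gf : E → E → E)
    (hfdef : ∀ x y : E, f x y = ∫ z, ℓ y z ∂(D x))
    (hGfdef : ∀ x y : E, Gf x y = ∫ z, G y z ∂(D x))
    (hfgrad : ∀ x y : E, HasGradientAt (f x) (Gf x y) y)
    (hDlip : ∀ x y : E, ∀ g : Z → ℝ, LipschitzWith 1 g →
      |(∫ z, g z ∂(D x)) - ∫ z, g z ∂(D y)| ≤ γ * ‖x - y‖)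
    (r : E → ℝ) (hr : ConvexOn ℝ univ r)
    (xbar : E) (hxbar : ∀ y : E, f xbar xbar + r xbar ≤ f xbar y + r y)
    (α : ℝ) (hα : 0 < α)
    (hsc : ∀ x : E, ConvexOn ℝ univ (fun y => f x y - α / 2 * ‖y‖ ^ 2))
    (hρ : γ * β / α ≤ 1 / 2)
    (x : E) (j : ℕ) (B C q : ℝ) (hB : 0 ≤ B) (hC : 0 ≤ C) (hq0 : 0 < q) (hq1 : q < 1)
    {Ω : Type*} [MeasurableSpace Ω] (P : Measure Ω) [IsProbabilityMeasure P]
    (X : Ω → E)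
    (hintφx : Integrable (fun ω => f x (X ω) + r (X ω)) P)
    (hintφ : Integrable (fun ω => f xbar (X ω) + r (X ω)) P)
    (hintX : ∀ y : E, Integrable (fun ω => ‖X ω - y‖ ^ 2) P)
    (hguarantee : ∀ y : E,
      (∫ ω, (f x (X ω) + r (X ω)) ∂P) - (f x y + r y)
        ≤ C * (1 - q) ^ j * (f x x + r x - (f x y + r y)
            + α / 2 * (∫ ω, ‖X ω - y‖ ^ 2 ∂P)) + B)
    (hpos : 0 < 1 - γ * β / α - C * (1 - q) ^ j) :
    (∫ ω, (f xbar (X ω) + r (X ω)) ∂P) - (f xbar xbar + r xbar)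
      ≤ ((γ * β / α + 2 * C * (1 - q) ^ j) / (1 - γ * β / α - C * (1 - q) ^ j))
          * (f xbar x + r x - (f xbar xbar + r xbar))
        + B / (1 - γ * β / α - C * (1 - q) ^ j) :=
  transfer_inexact_static_guarantee_general G β γ hβ hγ hlip D hintG f Gf hGfdef hfgrad hDlip r hr
    xbar hxbar α hα hsc hρ x j B C q hC hq1 P X hintφx hintφ hintX hguarantee hpos
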